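/- arXiv:2508.14498 — 3 statements merged into one kernel-verified Lean document; each statement's English description precedes it below -/
import Mathlib

section
/- Let σ > 1, β ∈ (0,1), and η ∈ ℝ with η(σ−1) < 1 and 1 + (β−η)(σ−1) > 0, and set γ_A := (σ−1)/(1−η(σ−1)) > 0 and γ_B := (σ−1)/(1+(β−η)(σ−1)) > 0. Let A₀, L : [0,n] → ℝ be measurable with 0 < a ≤ A₀(i), L(i) ≤ b and ∫₀ⁿ L(i) di = 1. Then (∫₀ⁿ A₀(i)^{γ_B} L(i)^{β γ_B} di)^{1/γ_B} ≤ (∫₀ⁿ A₀(i)^{γ_A} di)^{1/γ_A}; consequently the efficiency loss ΔX^EQ := (∫₀ⁿ A₀(i)^{γ_A} di)^{1/γ_A} − (∫₀ⁿ A₀(i)^{γ_B} L(i)^{β γ_B} di)^{1/γ_B} is nonnegative, and it equals 0 if and only if L(i) = A₀(i)^{γ_A} / ∫₀ⁿ A₀(k)^{γ_A} dk almost everywhere. -/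
/-!
Put `r = γB / γA`. The exponents satisfy `β γB = 1 - r` with `0 < r < 1`, so the integrand
`A₀ ^ γB L ^ (β γB)` is the weighted geometric mean `(A₀ ^ γA) ^ r L ^ (1 - r)`. Comparing it
pointwise with the arithmetic mean of the two probability densities `A₀ ^ γA / ∫ A₀ ^ γA` and `L`
bounds its integral by `(∫ A₀ ^ γA) ^ r`, with equality exactly when the densities agree a.e.
Raising to the power `1 / γB` turns `r` into `γB / γA · 1 / γB = 1 / γA`.
-/

open MeasureTheory Set Real

section Integrals

variable {α : Type*} [MeasurableSpace α] {μ : Measure α} {s : Set α} {r p b : ℝ}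
  {f g : α → ℝ}

theorem MeasureTheory.Integrable.rpow_mul_rpow_one_sub (hr0 : 0 ≤ r) (hr1 : r ≤ 1)
    (hf : Integrable f μ) (hg : Integrable g μ) (hf0 : 0 ≤ᵐ[μ] f) (hg0 : 0 ≤ᵐ[μ] g) :
    Integrable (fun x ↦ f x ^ r * g x ^ (1 - r)) μ := by
  refine Integrable.mono' ((hf.const_mul r).add (hg.const_mul (1 - r))) ?_ ?_
  · exact ((continuous_rpow_const hr0).comp_aestronglyMeasurable hf.aestronglyMeasurable).mul
      ((continuous_rpow_const (sub_nonneg.2 hr1)).comp_aestronglyMeasurable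
        hg.aestronglyMeasurable)
  · filter_upwards [hf0, hg0] with x hfx hgx
    rw [norm_of_nonneg (mul_nonneg (rpow_nonneg hfx _) (rpow_nonneg hgx _))]
    exact geom_mean_le_arith_mean2_weighted hr0 (sub_nonneg.2 hr1) hfx hgx (by ring)

theorem integral_rpow_mul_rpow_one_sub_le_one (hr0 : 0 < r) (hr1 : r < 1)
    (hf : Integrable f μ) (hg : Integrable g μ) (hf0 : 0 ≤ᵐ[μ] f) (hg0 : 0 ≤ᵐ[μ] g)
    (hf1 : ∫ x, f x ∂μ = 1) (hg1 : ∫ x, g x ∂μ = 1) :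
    ∫ x, f x ^ r * g x ^ (1 - r) ∂μ ≤ 1 ∧
      (∫ x, f x ^ r * g x ^ (1 - r) ∂μ = 1 ↔ f =ᵐ[μ] g) := by
  set gap := fun x ↦ r * f x + (1 - r) * g x - f x ^ r * g x ^ (1 - r)
  have hprod := hf.rpow_mul_rpow_one_sub hr0.le hr1.le hg hf0 hg0
  have hmean : Integrable (fun x ↦ r * f x + (1 - r) * g x) μ :=
    (hf.const_mul r).add (hg.const_mul (1 - r))
  have hgap_int : Integrable gap μ := hmean.sub hprod
  have hgap : ∫ x, gap x ∂μ = 1 - ∫ x, f x ^ r * g x ^ (1 - r) ∂μ := by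
    rw [integral_sub hmean hprod, integral_add (hf.const_mul r) (hg.const_mul (1 - r)),
      integral_const_mul, integral_const_mul, hf1, hg1]
    ring
  have hgap0 : 0 ≤ᵐ[μ] gap := by
    filter_upwards [hf0, hg0] with x hfx hgx
    exact sub_nonneg.2 (geom_mean_le_arith_mean2_weighted hr0.le (sub_nonneg.2 hr1.le)
      hfx hgx (by ring))
  have hgap_eq : gap =ᵐ[μ] 0 ↔ f =ᵐ[μ] g := by
    refine ⟨fun h ↦ ?_, fun h ↦ ?_⟩ <;> filter_upwards [h, hf0, hg0] with x hx hfx hgx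
    · exact (geom_mean_eq_arith_mean2_weighted_iff_of_pos hr0 (sub_pos.2 hr1) hfx hgx
        (by ring)).1 (sub_eq_zero.1 hx).symm
    · simp only [gap, Pi.zero_apply, hx, ← rpow_add' hgx (by norm_num : r + (1 - r) ≠ 0)]
      ring_nf
      simp
  constructor
  · linarith [integral_nonneg_of_ae hgap0]
  · rw [← hgap_eq, ← integral_eq_zero_iff_of_nonneg_ae hgap0 hgap_int, hgap, sub_eq_zero, eq_comm]

/-- Hölder's inequality for the exponents `1 / r`, `1 / (1 - r)`, with its equality case. -/
theorem integral_rpow_mul_rpow_one_sub_le (hr0 : 0 < r) (hr1 : r < 1)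
    (hf : Integrable f μ) (hg : Integrable g μ) (hf0 : 0 ≤ᵐ[μ] f) (hg0 : 0 ≤ᵐ[μ] g)
    (hfpos : 0 < ∫ x, f x ∂μ) (hg1 : ∫ x, g x ∂μ = 1) :
    ∫ x, f x ^ r * g x ^ (1 - r) ∂μ ≤ (∫ x, f x ∂μ) ^ r ∧
      (∫ x, f x ^ r * g x ^ (1 - r) ∂μ = (∫ x, f x ∂μ) ^ r ↔
        g =ᵐ[μ] fun x ↦ f x / ∫ x, f x ∂μ) := by
  set S := ∫ x, f x ∂μ
  have hSr : 0 < S ^ r := rpow_pos_of_pos hfpos r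
  have hnorm := integral_rpow_mul_rpow_one_sub_le_one hr0 hr1 (hf.div_const S) hg
    (hf0.mono fun x hx ↦ div_nonneg hx hfpos.le) hg0
    (by rw [integral_div, div_self hfpos.ne']) hg1
  have hscale : ∫ x, (f x / S) ^ r * g x ^ (1 - r) ∂μ =
      (∫ x, f x ^ r * g x ^ (1 - r) ∂μ) / S ^ r := by
    rw [← integral_div]
    refine integral_congr_ae (hf0.mono fun x hx ↦ ?_)
    simp only [div_rpow hx hfpos.le]
    ring
  rw [hscale, div_le_one hSr, div_eq_one_iff_eq hSr.ne'] at hnorm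
  exact ⟨hnorm.1, hnorm.2.trans Filter.eventuallyEq_comm⟩

theorem setIntegral_pos_of_forall_mem_pos (hs : MeasurableSet s) (hμs : μ s ≠ 0)
    (hf : IntegrableOn f s μ) (hpos : ∀ x ∈ s, 0 < f x) : 0 < ∫ x in s, f x ∂μ := by
  have hsupp : s ⊆ Function.support f := fun x hx ↦ (hpos x hx).ne'
  rw [setIntegral_pos_iff_support_of_nonneg_ae
      (ae_restrict_of_forall_mem hs fun x hx ↦ (hpos x hx).le) hf,
    inter_eq_right.2 hsupp]
  exact pos_iff_ne_zero.2 hμs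

theorem integrableOn_rpow_of_forall_mem_le (hs : MeasurableSet s) (hμs : μ s < ⊤)
    (hf : Measurable f) (hp : 0 ≤ p) (hf0 : ∀ x ∈ s, 0 ≤ f x) (hfb : ∀ x ∈ s, f x ≤ b) :
    IntegrableOn (fun x ↦ f x ^ p) s μ :=
  .of_bound hμs (hf.pow_const p).aestronglyMeasurable (b ^ p)
    (ae_restrict_of_forall_mem hs fun x hx ↦ by
      rw [norm_of_nonneg (rpow_nonneg (hf0 x hx) p)]
      exact rpow_le_rpow (hf0 x hx) (hfb x hx) hp)

end Integrals

section Exponents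

variable {x y p q : ℝ}

theorem rpow_div_rpow_one_div (hy : 0 ≤ y) (hq : q ≠ 0) :
    (y ^ (q / p)) ^ (1 / q) = y ^ (1 / p) := by
  rw [← rpow_mul hy]
  congr 1
  field_simp

theorem rpow_one_div_le_rpow_one_div_iff (hx : 0 ≤ x) (hy : 0 ≤ y) (hq : 0 < q) :
    x ^ (1 / q) ≤ y ^ (1 / p) ↔ x ≤ y ^ (q / p) := by
  rw [← rpow_div_rpow_one_div hy hq.ne', rpow_le_rpow_iff hx (rpow_nonneg hy _) (one_div_pos.2 hq)]

theorem rpow_one_div_eq_rpow_one_div_iff (hx : 0 ≤ x) (hy : 0 ≤ y) (hq : q ≠ 0) :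
    x ^ (1 / q) = y ^ (1 / p) ↔ x = y ^ (q / p) := by
  rw [← rpow_div_rpow_one_div hy hq, rpow_left_inj hx (rpow_nonneg hy _) (one_div_ne_zero hq)]

end Exponents

theorem mul_gammaB_eq_one_sub_div {β σ η γA γB : ℝ} (hσ : 1 < σ)
    (hη2 : 0 < 1 + (β - η) * (σ - 1))
    (hγA : γA = (σ - 1) / (1 - η * (σ - 1)))
    (hγB : γB = (σ - 1) / (1 + (β - η) * (σ - 1))) :
    β * γB = 1 - γB / γA := by
  rw [eq_sub_iff_add_eq, hγA, hγB, div_div_div_cancel_left' _ _ (by linarith), mul_div_assoc',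
    ← add_div, div_eq_one_iff_eq hη2.ne']
  ring

theorem statement7_general
    (n β σ η γA γB a b : ℝ)
    (hn : 0 < n) (hβ : β ∈ Set.Ioo (0:ℝ) 1) (hσ : 1 < σ)
    (hη1 : η * (σ - 1) < 1) (hη2 : 0 < 1 + (β - η) * (σ - 1))
    (hγA : γA = (σ - 1) / (1 - η * (σ - 1)))
    (hγB : γB = (σ - 1) / (1 + (β - η) * (σ - 1)))
    (A₀ L : ℝ → ℝ) (hA₀meas : Measurable A₀)
    (ha : 0 < a)
    (hA₀a : ∀ i ∈ Set.Icc (0:ℝ) n, a ≤ A₀ i)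
    (hA₀b : ∀ i ∈ Set.Icc (0:ℝ) n, A₀ i ≤ b)
    (hLa : ∀ i ∈ Set.Icc (0:ℝ) n, a ≤ L i)
    (hLint : (∫ i in Set.Icc (0:ℝ) n, L i) = 1) :
    0 < γA ∧ 0 < γB ∧
    (∫ i in Set.Icc (0:ℝ) n, A₀ i ^ γB * L i ^ (β * γB)) ^ (1 / γB)
      ≤ (∫ i in Set.Icc (0:ℝ) n, A₀ i ^ γA) ^ (1 / γA) ∧
    0 ≤ (∫ i in Set.Icc (0:ℝ) n, A₀ i ^ γA) ^ (1 / γA)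
      - (∫ i in Set.Icc (0:ℝ) n, A₀ i ^ γB * L i ^ (β * γB)) ^ (1 / γB) ∧
    ((∫ i in Set.Icc (0:ℝ) n, A₀ i ^ γA) ^ (1 / γA)
        - (∫ i in Set.Icc (0:ℝ) n, A₀ i ^ γB * L i ^ (β * γB)) ^ (1 / γB) = 0
      ↔ L =ᵐ[volume.restrict (Set.Icc (0:ℝ) n)]
          fun i => A₀ i ^ γA / ∫ k in Set.Icc (0:ℝ) n, A₀ k ^ γA) := by
  have hγA0 : 0 < γA := hγA ▸ div_pos (by linarith) (by linarith)
  have hγB0 : 0 < γB := hγB ▸ div_pos (by linarith) hη2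
  have hβγB := mul_gammaB_eq_one_sub_div hσ hη2 hγA hγB
  have hr_lt_one : γB / γA < 1 := by nlinarith [hβ.1]
  have hpos : ∀ i ∈ Icc 0 n, 0 < A₀ i ∧ 0 < L i :=
    fun i hi ↦ ⟨ha.trans_le (hA₀a i hi), ha.trans_le (hLa i hi)⟩
  have hAint : IntegrableOn (fun i ↦ A₀ i ^ γA) (Icc 0 n) :=
    integrableOn_rpow_of_forall_mem_le measurableSet_Icc measure_Icc_lt_top hA₀meas hγA0.le
      (fun i hi ↦ (hpos i hi).1.le) hA₀b
  have hS : 0 < ∫ i in Icc 0 n, A₀ i ^ γA :=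
    setIntegral_pos_of_forall_mem_pos measurableSet_Icc (by simpa using hn) hAint
      fun i hi ↦ rpow_pos_of_pos (hpos i hi).1 γA
  have hT : ∫ i in Icc 0 n, A₀ i ^ γB * L i ^ (β * γB) =
      ∫ i in Icc 0 n, (A₀ i ^ γA) ^ (γB / γA) * L i ^ (1 - γB / γA) := by
    refine setIntegral_congr_fun measurableSet_Icc fun i hi ↦ ?_
    rw [← rpow_mul (hpos i hi).1.le, hβγB, mul_div_cancel₀ _ hγA0.ne']
  obtain ⟨hle, heq⟩ := integral_rpow_mul_rpow_one_sub_le (div_pos hγB0 hγA0) hr_lt_one hAint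
    (.of_integral_ne_zero (by simp [hLint]))
    (ae_restrict_of_forall_mem measurableSet_Icc fun i hi ↦ rpow_nonneg (hpos i hi).1.le _)
    (ae_restrict_of_forall_mem measurableSet_Icc fun i hi ↦ (hpos i hi).2.le) hS hLint
  rw [← hT] at hle heq
  have hT0 : 0 ≤ ∫ i in Icc 0 n, A₀ i ^ γB * L i ^ (β * γB) :=
    setIntegral_nonneg measurableSet_Icc fun i hi ↦
      mul_nonneg (rpow_nonneg (hpos i hi).1.le _) (rpow_nonneg (hpos i hi).2.le _)
  have hpow_le := (rpow_one_div_le_rpow_one_div_iff hT0 hS.le hγB0).2 hle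
  refine ⟨hγA0, hγB0, hpow_le, sub_nonneg.2 hpow_le, ?_⟩
  rw [sub_eq_zero, eq_comm, rpow_one_div_eq_rpow_one_div_iff hT0 hS.le hγB0.ne', heq]

/-- (σ > 1 case.) The efficiency loss from labour immobility is
nonnegative: `(∫ A₀^{γ_B} L^{β γ_B})^{1/γ_B} ≤ (∫ A₀^{γ_A})^{1/γ_A}` where
`γ_A = (σ-1)/(1-η(σ-1)) > 0` and `γ_B = (σ-1)/(1+(β-η)(σ-1)) > 0`, with
equality iff `L(i) = A₀(i)^{γ_A} / ∫ A₀^{γ_A}` almost everywhere. -/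
theorem statement7
    (n β σ η γA γB a b : ℝ)
    (hn : 0 < n) (hβ : β ∈ Set.Ioo (0:ℝ) 1) (hσ : 1 < σ)
    (hη1 : η * (σ - 1) < 1) (hη2 : 0 < 1 + (β - η) * (σ - 1))
    (hγA : γA = (σ - 1) / (1 - η * (σ - 1)))
    (hγB : γB = (σ - 1) / (1 + (β - η) * (σ - 1)))
    (A₀ L : ℝ → ℝ) (hA₀meas : Measurable A₀) (hLmeas : Measurable L)
    (ha : 0 < a)
    (hA₀a : ∀ i ∈ Set.Icc (0:ℝ) n, a ≤ A₀ i)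
    (hA₀b : ∀ i ∈ Set.Icc (0:ℝ) n, A₀ i ≤ b)
    (hLa : ∀ i ∈ Set.Icc (0:ℝ) n, a ≤ L i)
    (hLb : ∀ i ∈ Set.Icc (0:ℝ) n, L i ≤ b)
    (hLint : (∫ i in Set.Icc (0:ℝ) n, L i) = 1) :
    0 < γA ∧ 0 < γB ∧
    (∫ i in Set.Icc (0:ℝ) n, A₀ i ^ γB * L i ^ (β * γB)) ^ (1 / γB)
      ≤ (∫ i in Set.Icc (0:ℝ) n, A₀ i ^ γA) ^ (1 / γA) ∧
    0 ≤ (∫ i in Set.Icc (0:ℝ) n, A₀ i ^ γA) ^ (1 / γA)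
      - (∫ i in Set.Icc (0:ℝ) n, A₀ i ^ γB * L i ^ (β * γB)) ^ (1 / γB) ∧
    ((∫ i in Set.Icc (0:ℝ) n, A₀ i ^ γA) ^ (1 / γA)
        - (∫ i in Set.Icc (0:ℝ) n, A₀ i ^ γB * L i ^ (β * γB)) ^ (1 / γB) = 0
      ↔ L =ᵐ[volume.restrict (Set.Icc (0:ℝ) n)]
          fun i => A₀ i ^ γA / ∫ k in Set.Icc (0:ℝ) n, A₀ k ^ γA) :=
  statement7_general n β σ η γA γB a b hn hβ hσ hη1 hη2 hγA hγB A₀ L hA₀meas ha hA₀a hA₀b hLa hLint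
end

section
/- With positive or sufficiently weak negative externalities the decentralized long-run equilibrium is efficient (First Welfare Theorem with externalities): let σ > 1 and η ∈ ℝ with β − 1 < η and η(σ−1) < 1, so that θ := (1−β+η)(σ−1)/ρ ∈ (0,1). Then for every firm distribution μ (nonnegative measurable with ∫₀ⁿ μ = 1), X_η(μ) ≤ X_η(μ^EQ_η), where μ^EQ_η(i) := A₀(i)^{(σ−1)/(1−η(σ−1))} / ∫₀ⁿ A₀(j)^{(σ−1)/(1−η(σ−1))} dj, with equality if and only if μ = μ^EQ_η almost everywhere. -/
open MeasureTheory Set Real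

/-! With `q := (σ-1)/(1-η(σ-1))` one has `q(1-θ) = (σ-1)/ρ`, so the integrand of `Xη μ` is
`(A₀ μ^(1-β+η))^((σ-1)/ρ) = Z^(1-θ) · μEQ^(1-θ) μ^θ` where `Z = ∫ A₀^q` and `μEQ = A₀^q / Z`.
Hence `Xη μ` is a strictly increasing function of `∫ μEQ^(1-θ) μ^θ`. Integrating the weighted
AM-GM inequality `p^(1-θ) f^θ ≤ (1-θ) p + θ f`, which is strict where `p ≠ f`, shows that over
densities `f` this integral is at most `1 = ∫ μEQ^(1-θ) μEQ^θ`, with equality iff `f = μEQ` a.e. -/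

section WeightedMean

variable {α : Type*} [MeasurableSpace α] {ν : Measure α} {s t : ℝ} {p f : α → ℝ}

lemma integrable_rpow_mul_rpow (hs : 0 ≤ s) (ht : 0 ≤ t) (hst : s + t = 1)
    (hp : 0 ≤ᵐ[ν] p) (hf : 0 ≤ᵐ[ν] f) (hpi : Integrable p ν) (hfi : Integrable f ν) :
    Integrable (fun x => p x ^ s * f x ^ t) ν := by
  refine ((hpi.const_mul s).add (hfi.const_mul t)).mono'
    ((hpi.aemeasurable.pow_const s).mul (hfi.aemeasurable.pow_const t)).aestronglyMeasurable ?_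
  filter_upwards [hp, hf] with x hpx hfx
  rw [Real.norm_of_nonneg (mul_nonneg (rpow_nonneg hpx s) (rpow_nonneg hfx t))]
  exact geom_mean_le_arith_mean2_weighted hs ht hpx hfx hst

lemma integral_rpow_mul_rpow_le (hs : 0 ≤ s) (ht : 0 ≤ t) (hst : s + t = 1)
    (hp : 0 ≤ᵐ[ν] p) (hf : 0 ≤ᵐ[ν] f) (hpi : Integrable p ν) (hfi : Integrable f ν) :
    ∫ x, p x ^ s * f x ^ t ∂ν ≤ s * ∫ x, p x ∂ν + t * ∫ x, f x ∂ν := by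
  rw [← integral_const_mul, ← integral_const_mul,
    ← integral_add (hpi.const_mul s) (hfi.const_mul t)]
  refine integral_mono_ae (integrable_rpow_mul_rpow hs ht hst hp hf hpi hfi)
    ((hpi.const_mul s).add (hfi.const_mul t)) ?_
  filter_upwards [hp, hf] with x hpx hfx
  exact geom_mean_le_arith_mean2_weighted hs ht hpx hfx hst

lemma integral_rpow_mul_rpow_eq_iff (hs : 0 < s) (ht : 0 < t) (hst : s + t = 1)
    (hp : 0 ≤ᵐ[ν] p) (hf : 0 ≤ᵐ[ν] f) (hpi : Integrable p ν) (hfi : Integrable f ν) :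
    ∫ x, p x ^ s * f x ^ t ∂ν = s * ∫ x, p x ∂ν + t * ∫ x, f x ∂ν ↔ p =ᵐ[ν] f := by
  have hmean : Integrable (fun x => s * p x + t * f x) ν :=
    (hpi.const_mul s).add (hfi.const_mul t)
  have hgeom := integrable_rpow_mul_rpow hs.le ht.le hst hp hf hpi hfi
  have hgap : 0 ≤ᵐ[ν] fun x => s * p x + t * f x - p x ^ s * f x ^ t := by
    filter_upwards [hp, hf] with x hpx hfx
    exact sub_nonneg.2 (geom_mean_le_arith_mean2_weighted hs.le ht.le hpx hfx hst)
  rw [← integral_const_mul, ← integral_const_mul, ← integral_add (hpi.const_mul s)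
    (hfi.const_mul t), eq_comm, ← sub_eq_zero, ← integral_sub hmean hgeom,
    integral_eq_zero_iff_of_nonneg_ae hgap (hmean.sub hgeom)]
  refine Filter.eventually_congr ?_
  filter_upwards [hp, hf] with x hpx hfx
  rw [Pi.zero_apply, sub_eq_zero, eq_comm]
  exact geom_mean_eq_arith_mean2_weighted_iff_of_pos hs ht hpx hfx hst

lemma integral_rpow_mul_rpow_le_and_eq_iff (hs : 0 < s) (ht : 0 < t) (hst : s + t = 1)
    (hp : 0 ≤ᵐ[ν] p) (hf : 0 ≤ᵐ[ν] f) (hpi : Integrable p ν) (hfi : Integrable f ν)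
    (hpf : ∫ x, f x ∂ν = ∫ x, p x ∂ν) :
    ∫ x, p x ^ s * f x ^ t ∂ν ≤ ∫ x, p x ^ s * p x ^ t ∂ν ∧
      (∫ x, p x ^ s * f x ^ t ∂ν = ∫ x, p x ^ s * p x ^ t ∂ν ↔ f =ᵐ[ν] p) := by
  have hself := (integral_rpow_mul_rpow_eq_iff hs ht hst hp hp hpi hpi).2 (by rfl)
  have hle := integral_rpow_mul_rpow_le hs.le ht.le hst hp hf hpi hfi
  have hiff := integral_rpow_mul_rpow_eq_iff hs ht hst hp hf hpi hfi
  rw [hpf] at hle hiff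
  rw [hself]
  exact ⟨hle, hiff.trans Filter.eventuallyEq_comm⟩

end WeightedMean

lemma integral_pos_of_ae_pos {α : Type*} [MeasurableSpace α] {ν : Measure α} [NeZero ν]
    {f : α → ℝ} (hf : ∀ᵐ x ∂ν, 0 < f x) (hfi : Integrable f ν) : 0 < ∫ x, f x ∂ν := by
  have hf0 : 0 ≤ᵐ[ν] f := hf.mono fun _ hx => hx.le
  rw [(integral_nonneg_of_ae hf0).lt_iff_ne', Ne, integral_eq_zero_iff_of_nonneg_ae hf0 hfi]
  intro hzero
  obtain ⟨x, hx, hx0⟩ := (hf.and hzero).exists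
  exact hx.ne' hx0

lemma integrable_rpow_of_ae_le {α : Type*} [MeasurableSpace α] {ν : Measure α}
    [IsFiniteMeasure ν] {A : α → ℝ} {b q : ℝ} (hA : AEMeasurable A ν) (h0 : 0 ≤ᵐ[ν] A)
    (hb : ∀ᵐ x ∂ν, A x ≤ b) (hq : 0 ≤ q) : Integrable (fun x => A x ^ q) ν := by
  refine Integrable.of_bound (C := b ^ q) (hA.pow_const q).aestronglyMeasurable ?_
  filter_upwards [h0, hb] with x hx0 hxb
  rw [Real.norm_of_nonneg (rpow_nonneg hx0 q)]
  exact rpow_le_rpow hx0 hxb hq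

lemma StrictMonoOn.le_and_eq_iff_of_nonneg {Φ : ℝ → ℝ} (hΦ : StrictMonoOn Φ (Ici 0)) {x y : ℝ}
    (hx : 0 ≤ x) {P : Prop} (hxy : x ≤ y ∧ (x = y ↔ P)) :
    Φ x ≤ Φ y ∧ (Φ x = Φ y ↔ P) :=
  have hy : 0 ≤ y := hx.trans hxy.1
  ⟨hΦ.monotoneOn hx hy hxy.1, (hΦ.injOn.eq_iff hx hy).trans hxy.2⟩

lemma strictMonoOn_mul_rpow {c e : ℝ} (hc : 0 < c) (he : 0 < e) :
    StrictMonoOn (fun x => (c * x) ^ e) (Ici 0) :=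
  fun _ hx _ _ hxy => rpow_lt_rpow (mul_nonneg hc.le hx) (mul_lt_mul_of_pos_left hxy hc) he

section Exponents

variable {β σ ρ η θ : ℝ}

lemma rho_pos (hβ : β < 1) (hσ : 1 < σ) (hρ : ρ = σ * (1 - β) + β) : 0 < ρ := by
  rw [hρ]; nlinarith

lemma rho_mul_one_sub_theta (hρ0 : ρ ≠ 0) (hρ : ρ = σ * (1 - β) + β)
    (hθ : θ = (1 - β + η) * (σ - 1) / ρ) : ρ * (1 - θ) = 1 - η * (σ - 1) := by
  rw [hθ, mul_one_sub, mul_div_cancel₀ _ hρ0, hρ]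
  ring

lemma theta_mem_Ioo (hρ0 : 0 < ρ) (hσ : 1 < σ) (hρ : ρ = σ * (1 - β) + β)
    (hη1 : β - 1 < η) (hη2 : η * (σ - 1) < 1) (hθ : θ = (1 - β + η) * (σ - 1) / ρ) :
    θ ∈ Ioo 0 1 := by
  have hθρ := rho_mul_one_sub_theta hρ0.ne' hρ hθ
  refine ⟨?_, by nlinarith⟩
  rw [hθ]
  exact div_pos (mul_pos (by linarith) (by linarith)) hρ0

lemma div_mul_one_sub_theta (hρ0 : 0 < ρ) (hρ : ρ = σ * (1 - β) + β)
    (hθ : θ = (1 - β + η) * (σ - 1) / ρ) (hθ1 : θ < 1) :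
    (σ - 1) / (1 - η * (σ - 1)) * (1 - θ) = (σ - 1) / ρ := by
  have hθ1' : 1 - θ ≠ 0 := by linarith
  rw [← rho_mul_one_sub_theta hρ0.ne' hρ hθ]
  field_simp

end Exponents

lemma mul_rpow_rpow_eq_normalized {A x Z k q r θ : ℝ} (hA : 0 ≤ A) (hx : 0 ≤ x) (hZ : 0 < Z)
    (hqr : q * (1 - θ) = r) (hkr : k * r = θ) :
    (A * x ^ k) ^ r = Z ^ (1 - θ) * ((A ^ q / Z) ^ (1 - θ) * x ^ θ) := by
  have hZθ : Z ^ (1 - θ) ≠ 0 := (rpow_pos_of_pos hZ _).ne'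
  rw [mul_rpow hA (rpow_nonneg hx _), ← rpow_mul hx, hkr, div_rpow (rpow_nonneg hA _) hZ.le,
    ← rpow_mul hA, hqr]
  field_simp

theorem statement10_general
    (n β σ ρ η θ a b : ℝ)
    (hβ : β ∈ Set.Ioo (0:ℝ) 1) (hσ : 1 < σ)
    (hρ : ρ = σ * (1 - β) + β)
    (hη1 : β - 1 < η) (hη2 : η * (σ - 1) < 1)
    (hθ : θ = (1 - β + η) * (σ - 1) / ρ)
    (A₀ : ℝ → ℝ) (hA₀meas : Measurable A₀)
    (ha : 0 < a)
    (hA₀a : ∀ i ∈ Set.Icc (0:ℝ) n, a ≤ A₀ i)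
    (hA₀b : ∀ i ∈ Set.Icc (0:ℝ) n, A₀ i ≤ b)
    (Xη : (ℝ → ℝ) → ℝ)
    (hXη : ∀ μ : ℝ → ℝ,
      Xη μ = (∫ j in Set.Icc (0:ℝ) n,
        (A₀ j * μ j ^ (1 - β + η)) ^ ((σ - 1) / ρ)) ^ (ρ / (σ - 1)))
    (μEQ : ℝ → ℝ)
    (hμEQ : ∀ i, μEQ i = A₀ i ^ ((σ - 1) / (1 - η * (σ - 1))) /
      ∫ j in Set.Icc (0:ℝ) n, A₀ j ^ ((σ - 1) / (1 - η * (σ - 1)))) :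
    θ ∈ Set.Ioo (0:ℝ) 1 ∧
    ∀ μ : ℝ → ℝ, Measurable μ → (∀ i ∈ Set.Icc (0:ℝ) n, 0 ≤ μ i) →
      (∫ i in Set.Icc (0:ℝ) n, μ i) = 1 →
      Xη μ ≤ Xη μEQ ∧
      (Xη μ = Xη μEQ ↔ μ =ᵐ[volume.restrict (Set.Icc (0:ℝ) n)] μEQ) := by
  have hσ1 : 0 < σ - 1 := sub_pos.2 hσ
  have hρ0 := rho_pos hβ.2 hσ hρ
  obtain ⟨hθ0, hθ1⟩ := theta_mem_Ioo hρ0 hσ hρ hη1 hη2 hθ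
  refine ⟨⟨hθ0, hθ1⟩, fun μ _ hμ0 hμ1 => ?_⟩
  set ν := volume.restrict (Icc (0:ℝ) n)
  set q := (σ - 1) / (1 - η * (σ - 1))
  set Z := ∫ j in Icc (0:ℝ) n, A₀ j ^ q
  have hA : ∀ i ∈ Icc (0:ℝ) n, 0 < A₀ i := fun i hi => ha.trans_le (hA₀a i hi)
  have hAν : ∀ᵐ i ∂ν, 0 < A₀ i := ae_restrict_of_forall_mem measurableSet_Icc hA
  have : NeZero ν := ⟨fun h => by simp [h] at hμ1⟩
  have hgi : Integrable (fun i => A₀ i ^ q) ν :=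
    integrable_rpow_of_ae_le hA₀meas.aemeasurable (hAν.mono fun _ h => h.le)
      (ae_restrict_of_forall_mem measurableSet_Icc hA₀b) (div_pos hσ1 (by linarith)).le
  have hZ : 0 < Z := integral_pos_of_ae_pos (hAν.mono fun _ h => rpow_pos_of_pos h q) hgi
  have hEQ : μEQ = fun i => A₀ i ^ q / Z := funext hμEQ
  have hX : ∀ f : ℝ → ℝ, (∀ i ∈ Icc (0:ℝ) n, 0 ≤ f i) →
      Xη f = (Z ^ (1 - θ) * ∫ i, μEQ i ^ (1 - θ) * f i ^ θ ∂ν) ^ (ρ / (σ - 1)) := by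
    intro f hf
    rw [hXη, ← integral_const_mul, hEQ]
    refine congrArg (· ^ _) (setIntegral_congr_fun measurableSet_Icc fun i hi => ?_)
    exact mul_rpow_rpow_eq_normalized (hA i hi).le (hf i hi) hZ
      (div_mul_one_sub_theta hρ0 hρ hθ hθ1) (by rw [hθ, mul_div_assoc])
  have hEQ0 : ∀ i ∈ Icc (0:ℝ) n, 0 ≤ μEQ i := fun i hi => by
    rw [hEQ]; exact div_nonneg (rpow_nonneg (hA i hi).le q) hZ.le
  have hμi : Integrable μ ν := .of_integral_ne_zero (by rw [hμ1]; exact one_ne_zero)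
  have hμEQ1 : ∫ i, μ i ∂ν = ∫ i, μEQ i ∂ν := by rw [hμ1, hEQ, integral_div, div_self hZ.ne']
  have hΦ := strictMonoOn_mul_rpow (rpow_pos_of_pos hZ (1 - θ)) (div_pos hρ0 hσ1)
  rw [hX μ hμ0, hX μEQ hEQ0]
  exact hΦ.le_and_eq_iff_of_nonneg
    (setIntegral_nonneg measurableSet_Icc fun i hi =>
      mul_nonneg (rpow_nonneg (hEQ0 i hi) _) (rpow_nonneg (hμ0 i hi) _))
    (integral_rpow_mul_rpow_le_and_eq_iff (by linarith) hθ0 (by ring)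
      (ae_restrict_of_forall_mem measurableSet_Icc hEQ0)
      (ae_restrict_of_forall_mem measurableSet_Icc hμ0) (hEQ ▸ hgi.div_const Z) hμi hμEQ1)

/-- First Welfare Theorem with externalities: for σ > 1 and
β - 1 < η with η(σ-1) < 1 (so θ := (1-β+η)(σ-1)/ρ ∈ (0,1)), every firm
distribution μ satisfies `X_η μ ≤ X_η μEQη`, with equality iff μ = μEQη
almost everywhere, where
`μEQη i = A₀ i ^ ((σ-1)/(1-η(σ-1))) / ∫ A₀ ^ ((σ-1)/(1-η(σ-1)))`. -/
theorem statement10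
    (n β σ ρ η θ a b : ℝ)
    (hn : 0 < n) (hβ : β ∈ Set.Ioo (0:ℝ) 1) (hσ : 1 < σ)
    (hρ : ρ = σ * (1 - β) + β)
    (hη1 : β - 1 < η) (hη2 : η * (σ - 1) < 1)
    (hθ : θ = (1 - β + η) * (σ - 1) / ρ)
    (A₀ : ℝ → ℝ) (hA₀meas : Measurable A₀)
    (ha : 0 < a)
    (hA₀a : ∀ i ∈ Set.Icc (0:ℝ) n, a ≤ A₀ i)
    (hA₀b : ∀ i ∈ Set.Icc (0:ℝ) n, A₀ i ≤ b)
    (Xη : (ℝ → ℝ) → ℝ)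
    (hXη : ∀ μ : ℝ → ℝ,
      Xη μ = (∫ j in Set.Icc (0:ℝ) n,
        (A₀ j * μ j ^ (1 - β + η)) ^ ((σ - 1) / ρ)) ^ (ρ / (σ - 1)))
    (μEQ : ℝ → ℝ)
    (hμEQ : ∀ i, μEQ i = A₀ i ^ ((σ - 1) / (1 - η * (σ - 1))) /
      ∫ j in Set.Icc (0:ℝ) n, A₀ j ^ ((σ - 1) / (1 - η * (σ - 1)))) :
    θ ∈ Set.Ioo (0:ℝ) 1 ∧
    ∀ μ : ℝ → ℝ, Measurable μ → (∀ i ∈ Set.Icc (0:ℝ) n, 0 ≤ μ i) →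
      (∫ i in Set.Icc (0:ℝ) n, μ i) = 1 →
      Xη μ ≤ Xη μEQ ∧
      (Xη μ = Xη μEQ ↔ μ =ᵐ[volume.restrict (Set.Icc (0:ℝ) n)] μEQ) :=
  statement10_general n β σ ρ η θ a b hβ hσ hρ hη1 hη2 hθ A₀ hA₀meas ha hA₀a hA₀b Xη hXη μEQ hμEQ
end

section
/- With non-symmetric preferences, profit rates are equalized in the long-run equilibrium: let γ : [0,n] → ℝ be measurable with 0 < c ≤ γ(i) ≤ d, and define μ^EQ_γ(i) := γ(i)^σ A(i)^{σ−1} / ∫₀ⁿ γ(j)^σ A(j)^{σ−1} dj. Then the profit rate with preference weights γ, namely π_γ(i) := (1−β) γ(i)^{σ/ρ} A(i)^{(σ−1)/ρ} μ(i)^{−1/ρ} / ∫₀ⁿ γ(j)^{σ/ρ} A(j)^{(σ−1)/ρ} μ(j)^{(ρ−1)/ρ} dj, evaluated at μ = μ^EQ_γ equals 1 − β for every i ∈ [0,n]. -/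
open MeasureTheory Set Real

/-!
Write `g = γ^σ A^(σ-1)` and `Z = ∫ g`, so that `μEQ = g / Z`. The weight `γ^(σ/ρ) A^((σ-1)/ρ)`
is `g^(1/ρ)`, hence the numerator of the profit rate collapses to `(1-β) Z^(1/ρ)`, while the
integrand of the denominator is `g^(1/ρ) (g/Z)^(1-1/ρ) = g / Z^(1-1/ρ)`, whose integral is again
`Z^(1/ρ)`.
-/

theorem rpow_le_max_rpow_of_mem_Icc {a b x : ℝ} (ha : 0 < a) (hx : x ∈ Icc a b) (r : ℝ) :
    x ^ r ≤ max (a ^ r) (b ^ r) := by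
  rcases le_or_gt 0 r with hr | hr
  · exact le_max_of_le_right (rpow_le_rpow (ha.le.trans hx.1) hx.2 hr)
  · exact le_max_of_le_left (rpow_le_rpow_of_nonpos ha hx.1 hr.le)

theorem rpow_div_mul_rpow_div {x y : ℝ} (hx : 0 ≤ x) (hy : 0 ≤ y) (p q r : ℝ) :
    x ^ (p / r) * y ^ (q / r) = (x ^ p * y ^ q) ^ r⁻¹ := by
  rw [mul_rpow (rpow_nonneg hx _) (rpow_nonneg hy _), ← rpow_mul hx, ← rpow_mul hy,
    div_eq_mul_inv, div_eq_mul_inv]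

theorem rpow_mul_div_rpow_neg {x z : ℝ} (hx : 0 < x) (hz : 0 ≤ z) (r : ℝ) :
    x ^ r * (x / z) ^ (-r) = z ^ r := by
  have hxr : x ^ r ≠ 0 := (rpow_pos_of_pos hx r).ne'
  rw [div_rpow hx.le hz, rpow_neg hx.le, rpow_neg hz]
  field_simp

theorem rpow_mul_div_rpow_one_sub {x z : ℝ} (hx : 0 ≤ x) (hz : 0 ≤ z) (r : ℝ) :
    x ^ r * (x / z) ^ (1 - r) = x / z ^ (1 - r) := by
  rw [div_rpow hx hz, ← mul_div_assoc, ← rpow_add' hx (by simp), add_sub_cancel, rpow_one]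

section SetIntegral

variable {α : Type*} [MeasurableSpace α] {μ : Measure α} {s : Set α}

theorem setIntegral_pos_of_forall_pos {f : α → ℝ} (hs : MeasurableSet s) (hμs : μ s ≠ 0)
    (hf : IntegrableOn f s μ) (hpos : ∀ x ∈ s, 0 < f x) : 0 < ∫ x in s, f x ∂μ := by
  have hsupp : Function.support f ∩ s = s :=
    inter_eq_right.2 fun x hx => (hpos x hx).ne'
  rw [setIntegral_pos_iff_support_of_nonneg_ae
    ((ae_restrict_iff' hs).2 (ae_of_all _ fun x hx => (hpos x hx).le)) hf, hsupp]
  exact pos_iff_ne_zero.2 hμs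

theorem integrableOn_rpow_mul_rpow {f g : α → ℝ} {a b c d : ℝ} (hs : MeasurableSet s)
    (hμs : μ s ≠ ⊤) (hf : Measurable f) (hg : Measurable g) (ha : 0 < a) (hc : 0 < c)
    (hfab : ∀ x ∈ s, f x ∈ Icc a b) (hgcd : ∀ x ∈ s, g x ∈ Icc c d) (p q : ℝ) :
    IntegrableOn (fun x => f x ^ p * g x ^ q) s μ := by
  refine Measure.integrableOn_of_bounded (M := max (a ^ p) (b ^ p) * max (c ^ q) (d ^ q)) hμs
    ((hf.pow_const p).mul (hg.pow_const q)).aestronglyMeasurable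
    ((ae_restrict_iff' hs).2 (ae_of_all _ fun x hx => ?_))
  have hfx : 0 < f x := ha.trans_le (hfab x hx).1
  have hgx : 0 < g x := hc.trans_le (hgcd x hx).1
  rw [norm_of_nonneg (by positivity)]
  exact mul_le_mul (rpow_le_max_rpow_of_mem_Icc ha (hfab x hx) p)
    (rpow_le_max_rpow_of_mem_Icc hc (hgcd x hx) q) (by positivity)
    ((rpow_pos_of_pos ha p).le.trans (le_max_left _ _))

theorem setIntegral_rpow_mul_div_rpow_one_sub {g : α → ℝ} (hs : MeasurableSet s)
    (hg : ∀ x ∈ s, 0 ≤ g x) (hZ : 0 < ∫ x in s, g x ∂μ) (r : ℝ) :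
    ∫ x in s, g x ^ r * (g x / ∫ y in s, g y ∂μ) ^ (1 - r) ∂μ = (∫ x in s, g x ∂μ) ^ r := by
  rw [setIntegral_congr_fun hs fun x hx => rpow_mul_div_rpow_one_sub (hg x hx) hZ.le r,
    integral_div, div_eq_iff (rpow_pos_of_pos hZ _).ne', ← rpow_add hZ, add_sub_cancel, rpow_one]

end SetIntegral

theorem statement15_general
    (n β σ ρ a b c d : ℝ)
    (hn : 0 < n) (hβ : β ∈ Set.Ioo (0:ℝ) 1) (hσpos : 0 < σ)
    (hρ : ρ = σ * (1 - β) + β)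
    (A γ : ℝ → ℝ) (hAmeas : Measurable A) (hγmeas : Measurable γ)
    (ha : 0 < a)
    (hAa : ∀ i ∈ Set.Icc (0:ℝ) n, a ≤ A i) (hAb : ∀ i ∈ Set.Icc (0:ℝ) n, A i ≤ b)
    (hc : 0 < c)
    (hγc : ∀ i ∈ Set.Icc (0:ℝ) n, c ≤ γ i) (hγd : ∀ i ∈ Set.Icc (0:ℝ) n, γ i ≤ d)
    (μEQ : ℝ → ℝ)
    (hμEQ : ∀ i, μEQ i = γ i ^ σ * A i ^ (σ - 1) /
      ∫ j in Set.Icc (0:ℝ) n, γ j ^ σ * A j ^ (σ - 1)) :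
    ∀ i ∈ Set.Icc (0:ℝ) n,
      (1 - β) * γ i ^ (σ / ρ) * A i ^ ((σ - 1) / ρ) * μEQ i ^ (-(1 / ρ)) /
        (∫ j in Set.Icc (0:ℝ) n,
          γ j ^ (σ / ρ) * A j ^ ((σ - 1) / ρ) * μEQ j ^ ((ρ - 1) / ρ))
      = 1 - β := by
  intro i hi
  obtain ⟨hβ0, hβ1⟩ := hβ
  have hρ0 : ρ ≠ 0 := by rw [hρ]; nlinarith
  have hγ : ∀ j ∈ Icc 0 n, γ j ∈ Icc c d := fun j hj => ⟨hγc j hj, hγd j hj⟩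
  have hA : ∀ j ∈ Icc 0 n, A j ∈ Icc a b := fun j hj => ⟨hAa j hj, hAb j hj⟩
  set g : ℝ → ℝ := fun j => γ j ^ σ * A j ^ (σ - 1)
  have hg : ∀ j ∈ Icc 0 n, 0 < g j := fun j hj =>
    mul_pos (rpow_pos_of_pos (hc.trans_le (hγ j hj).1) _)
      (rpow_pos_of_pos (ha.trans_le (hA j hj).1) _)
  have hZ : 0 < ∫ j in Icc 0 n, g j :=
    setIntegral_pos_of_forall_pos measurableSet_Icc (by simp [hn])
      (integrableOn_rpow_mul_rpow measurableSet_Icc (by simp) hγmeas hAmeas hc ha hγ hA _ _) hg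
  have hweight : ∀ j ∈ Icc 0 n, γ j ^ (σ / ρ) * A j ^ ((σ - 1) / ρ) = g j ^ ρ⁻¹ := fun j hj =>
    rpow_div_mul_rpow_div (hc.trans_le (hγ j hj).1).le (ha.trans_le (hA j hj).1).le _ _ _
  have hden : ∫ j in Icc 0 n, γ j ^ (σ / ρ) * A j ^ ((σ - 1) / ρ) * μEQ j ^ ((ρ - 1) / ρ)
      = (∫ j in Icc 0 n, g j) ^ ρ⁻¹ := by
    rw [← setIntegral_rpow_mul_div_rpow_one_sub measurableSet_Icc (fun j hj => (hg j hj).le) hZ]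
    refine setIntegral_congr_fun measurableSet_Icc fun j hj => ?_
    rw [hweight j hj, hμEQ, show (ρ - 1) / ρ = 1 - ρ⁻¹ by field_simp]
  rw [hden, mul_assoc (1 - β), hweight i hi, mul_assoc, hμEQ, show -(1 / ρ) = -ρ⁻¹ by ring,
    rpow_mul_div_rpow_neg (hg i hi) hZ.le, mul_div_assoc, div_self (rpow_pos_of_pos hZ _).ne',
    mul_one]

/-- With non-symmetric preferences (CES weights γ), profit
rates are equalized in the long-run equilibrium: at
`μEQγ i = γ i^σ A i^{σ-1} / ∫ γ^σ A^{σ-1}`, the profit rate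
`π_γ(i) = (1-β) γ i^{σ/ρ} A i^{(σ-1)/ρ} μ i^{-1/ρ}
  / ∫ γ^{σ/ρ} A^{(σ-1)/ρ} μ^{(ρ-1)/ρ}` equals `1 - β` for every `i ∈ [0,n]`. -/
theorem statement15
    (n β σ ρ a b c d : ℝ)
    (hn : 0 < n) (hβ : β ∈ Set.Ioo (0:ℝ) 1) (hσpos : 0 < σ) (hσne : σ ≠ 1)
    (hρ : ρ = σ * (1 - β) + β)
    (A γ : ℝ → ℝ) (hAmeas : Measurable A) (hγmeas : Measurable γ)
    (ha : 0 < a)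
    (hAa : ∀ i ∈ Set.Icc (0:ℝ) n, a ≤ A i) (hAb : ∀ i ∈ Set.Icc (0:ℝ) n, A i ≤ b)
    (hc : 0 < c)
    (hγc : ∀ i ∈ Set.Icc (0:ℝ) n, c ≤ γ i) (hγd : ∀ i ∈ Set.Icc (0:ℝ) n, γ i ≤ d)
    (μEQ : ℝ → ℝ)
    (hμEQ : ∀ i, μEQ i = γ i ^ σ * A i ^ (σ - 1) /
      ∫ j in Set.Icc (0:ℝ) n, γ j ^ σ * A j ^ (σ - 1)) :
    ∀ i ∈ Set.Icc (0:ℝ) n,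
      (1 - β) * γ i ^ (σ / ρ) * A i ^ ((σ - 1) / ρ) * μEQ i ^ (-(1 / ρ)) /
        (∫ j in Set.Icc (0:ℝ) n,
          γ j ^ (σ / ρ) * A j ^ ((σ - 1) / ρ) * μEQ j ^ ((ρ - 1) / ρ))
      = 1 - β :=
  statement15_general n β σ ρ a b c d hn hβ hσpos hρ A γ hAmeas hγmeas ha hAa hAb hc hγc hγd μEQ
    hμEQ
end
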